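/- Fix real numbers μ_1 ≠ μ_2 and set Δ = μ_2 − μ_1. There exist positive numerical constants c and c' such that, for every n > 4Δ^{−2} and every x ∈ [1/2, n/2 − 1 − 2Δ^{−2}), the minimax probability inf_{τ̂} sup_{τ* ∈ {2,…,n}} P_{θ(τ*,μ)}( |τ̂ − τ*| ≥ 2Δ^{−2} + x ) ≥ c e^{−c' x Δ²}, where the infimum is over all estimators τ̂ (measurable functions of Y with values in {2,…,n}). -/

import Mathlib

/-!
Le Cam's two-point method. Put `r = 2Δ⁻² + x` and compare the change points `τ = 2` and
`τ' = 2 + m` with `m = ⌈2r⌉ ≤ n - 2`: they are `2r` apart, so whenever the estimate computed from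
the data of `τ` is within `r` of `τ'`, it misses `τ` by at least `r`. The two signals differ by
`-Δ` on the `m` coordinates `[τ, τ')`, so by the Cameron–Martin formula (proved one coordinate at
a time, using the independence of the noise) `P(Y_τ' ∈ A) = E[1_A(Y_τ) ρ]`, where the likelihood
ratio `ρ` has `E ρ = 1` and `E ρ² = exp(mΔ²)`. By Cauchy–Schwarz, either the error event of `τ`
has probability at least `exp(-mΔ²)/4`, or that of `τ'` has probability at least `1/2`; and
`mΔ² ≤ 4 + 4xΔ²` because `x ≥ 1/2`.
-/

open MeasureTheory ProbabilityTheory Finset Real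

/-- i.i.d. standard Gaussian noise hypotheses. -/
def IsStdGaussianNoise {Ω : Type} [MeasurableSpace Ω] (P : Measure Ω) (ε : ℕ → Ω → ℝ) : Prop :=
  (∀ i, Measurable (ε i)) ∧
  iIndepFun ε P ∧
  (∀ i, P.map (ε i) = gaussianReal 0 1)

/-- Signal with a single change-point at position `τ` and levels `μ₁, μ₂`. -/
def oneCP (τ : ℕ) (μ₁ μ₂ : ℝ) : ℕ → ℝ := fun i => if i < τ then μ₁ else μ₂

open scoped ENNReal

section GaussianShift

variable {Ω α : Type*} [MeasurableSpace Ω] [MeasurableSpace α] {P : Measure Ω}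

lemma gaussianPDF_one_eq_mul_exp (a x : ℝ) :
    gaussianPDF a 1 x = gaussianPDF 0 1 x * ENNReal.ofReal (exp (a * x - a ^ 2 / 2)) := by
  rw [gaussianPDF, gaussianPDF, ← ENNReal.ofReal_mul (gaussianPDFReal_nonneg _ _ _)]
  simp only [gaussianPDFReal, mul_assoc, ← exp_add]
  congr 3
  push_cast
  ring

lemma lintegral_gaussianReal_comp_add_const (a : ℝ) {g : ℝ → ℝ≥0∞} (hg : Measurable g) :
    ∫⁻ x, g (x + a) ∂gaussianReal 0 1 =
      ∫⁻ x, g x * ENNReal.ofReal (exp (a * x - a ^ 2 / 2)) ∂gaussianReal 0 1 := by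
  rw [← lintegral_map hg (measurable_add_const a), gaussianReal_map_add_const, zero_add,
    gaussianReal_of_var_ne_zero _ one_ne_zero, gaussianReal_of_var_ne_zero _ one_ne_zero,
    lintegral_withDensity_eq_lintegral_mul _ (measurable_gaussianPDF _ _) hg,
    lintegral_withDensity_eq_lintegral_mul _ (measurable_gaussianPDF _ _) (by fun_prop)]
  congr 1 with x
  simp only [Pi.mul_apply]
  rw [gaussianPDF_one_eq_mul_exp a x]
  ring

lemma ProbabilityTheory.IndepFun.lintegral_comp_add_gaussian [IsFiniteMeasure P] {X : Ω → α}
    {T : Ω → ℝ} (hX : Measurable X) (hT : Measurable T) (hXT : IndepFun X T P)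
    (hT_law : P.map T = gaussianReal 0 1) (a : ℝ) {G : α × ℝ → ℝ≥0∞} (hG : Measurable G) :
    ∫⁻ ω, G (X ω, T ω + a) ∂P =
      ∫⁻ ω, G (X ω, T ω) * ENNReal.ofReal (exp (a * T ω - a ^ 2 / 2)) ∂P := by
  have hlaw : P.map (fun ω => (X ω, T ω)) = (P.map X).prod (gaussianReal 0 1) := by
    rw [← hT_law]
    exact (indepFun_iff_map_prod_eq_prod_map_map hX.aemeasurable hT.aemeasurable).mp hXT
  have hG' : Measurable fun p : α × ℝ => G p * ENNReal.ofReal (exp (a * p.2 - a ^ 2 / 2)) := by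
    fun_prop
  have hGa : Measurable fun p : α × ℝ => G (p.1, p.2 + a) := by fun_prop
  rw [← lintegral_map hGa (hX.prodMk hT),
    ← lintegral_map hG' (hX.prodMk hT), hlaw, lintegral_prod _ hGa.aemeasurable,
    lintegral_prod _ hG'.aemeasurable]
  exact lintegral_congr fun y =>
    lintegral_gaussianReal_comp_add_const a (hG.comp measurable_prodMk_left)

end GaussianShift

section SecondMoment

variable {Ω : Type*} [MeasurableSpace Ω] {P : Measure Ω}

lemma sq_setLIntegral_le_measure_mul_lintegral_sq {ρ : Ω → ℝ≥0∞} (hρ : AEMeasurable ρ P)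
    (s : Set Ω) : (∫⁻ ω in s, ρ ω ∂P) ^ 2 ≤ P s * ∫⁻ ω, ρ ω ^ 2 ∂P := by
  have h := ENNReal.lintegral_mul_le_Lp_mul_Lq (P.restrict s) Real.HolderConjugate.two_two
    (f := fun _ => 1) aemeasurable_const hρ.restrict
  simp only [Pi.mul_apply, one_mul, ENNReal.one_rpow, lintegral_const, Measure.restrict_apply,
    MeasurableSet.univ, Set.univ_inter] at h
  calc (∫⁻ ω in s, ρ ω ∂P) ^ 2
      ≤ ((P s) ^ (1 / 2 : ℝ) * (∫⁻ ω in s, ρ ω ^ (2 : ℝ) ∂P) ^ (1 / 2 : ℝ)) ^ 2 := by gcongr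
    _ = P s * ∫⁻ ω in s, ρ ω ^ 2 ∂P := by
      rw [mul_pow, ← ENNReal.rpow_natCast, ← ENNReal.rpow_natCast, ← ENNReal.rpow_mul,
        ← ENNReal.rpow_mul]
      norm_num
    _ ≤ P s * ∫⁻ ω, ρ ω ^ 2 ∂P := by gcongr; exact Measure.restrict_le_self

lemma inf_le_measure_compl_sup_setLIntegral {ρ : Ω → ℝ≥0∞} (hρ : AEMeasurable ρ P)
    (hρ_one : ∫⁻ ω, ρ ω ∂P = 1) {K : ℝ≥0∞} (hK : ∫⁻ ω, ρ ω ^ 2 ∂P ≤ K) {D : Set Ω}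
    (hD : MeasurableSet D) : (4 * K)⁻¹ ⊓ 2⁻¹ ≤ P Dᶜ ⊔ ∫⁻ ω in D, ρ ω ∂P := by
  by_cases hDc : (4 * K)⁻¹ ≤ P Dᶜ
  · exact inf_le_left.trans (le_sup_of_le_left hDc)
  refine inf_le_right.trans (le_sup_of_le_right ?_)
  have hsq : (∫⁻ ω in Dᶜ, ρ ω ∂P) ^ 2 ≤ 2⁻¹ ^ 2 :=
    calc (∫⁻ ω in Dᶜ, ρ ω ∂P) ^ 2 ≤ P Dᶜ * K :=
          (sq_setLIntegral_le_measure_mul_lintegral_sq hρ Dᶜ).trans (by gcongr)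
      _ ≤ (4 * K)⁻¹ * K := by gcongr; exact (not_le.mp hDc).le
      _ = 4⁻¹ * (K⁻¹ * K) := by rw [ENNReal.mul_inv (by simp) (by simp), mul_assoc]
      _ ≤ 4⁻¹ * 1 := by gcongr; exact ENNReal.inv_mul_le_one K
      _ = 2⁻¹ ^ 2 := by rw [mul_one, ← ENNReal.inv_pow]; norm_num
  have hsplit := lintegral_add_compl ρ hD (μ := P)
  rw [hρ_one] at hsplit
  calc 2⁻¹ = 1 - 2⁻¹ := ENNReal.one_sub_inv_two.symm
    _ ≤ ∫⁻ ω in D, ρ ω ∂P := by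
      rw [← hsplit]
      exact tsub_le_iff_right.mpr
        (add_le_add le_rfl ((ENNReal.pow_le_pow_left_iff two_ne_zero).mp hsq))

end SecondMoment

/-- The likelihood ratio of `N(w, I)` against `N(0, I)` at `e`, for a mean shift `w` supported
in `S`. -/
noncomputable def gaussianShiftDensity (S : Finset ℕ) (w e : ℕ → ℝ) : ℝ≥0∞ :=
  ENNReal.ofReal (exp (∑ i ∈ S, (w i * e i - w i ^ 2 / 2)))

@[fun_prop]
lemma measurable_gaussianShiftDensity (S : Finset ℕ) (w : ℕ → ℝ) :
    Measurable (gaussianShiftDensity S w) := by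
  unfold gaussianShiftDensity
  fun_prop

lemma gaussianShiftDensity_sq (S : Finset ℕ) (w e : ℕ → ℝ) :
    gaussianShiftDensity S w e ^ 2 =
      gaussianShiftDensity S (2 • w) e * ENNReal.ofReal (exp (∑ i ∈ S, w i ^ 2)) := by
  rw [gaussianShiftDensity, gaussianShiftDensity, ← ENNReal.ofReal_pow (exp_nonneg _),
    ← ENNReal.ofReal_mul (exp_nonneg _), ← exp_nat_mul, ← exp_add, ← sum_add_distrib, mul_sum]
  congr 3 with i
  simp only [Pi.smul_apply]
  push_cast
  ring

lemma oneCP_eq_add_ite {τ τ' : ℕ} (h : τ ≤ τ') (μ₁ μ₂ : ℝ) (i : ℕ) :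
    oneCP τ' μ₁ μ₂ i = oneCP τ μ₁ μ₂ i + if i ∈ Ico τ τ' then μ₁ - μ₂ else 0 := by
  simp only [oneCP, mem_Ico]
  split_ifs <;> first | omega | ring

namespace IsStdGaussianNoise

variable {Ω : Type} [MeasurableSpace Ω] {P : Measure Ω} {ε : ℕ → Ω → ℝ}

lemma measurable_pi (hε : IsStdGaussianNoise P ε) : Measurable fun ω i => ε i ω :=
  measurable_pi_lambda _ hε.1

lemma indepFun_update_zero (hε : IsStdGaussianNoise P ε) (j : ℕ) :
    IndepFun (fun ω => Function.update (ε · ω) j 0) (ε j) P := by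
  have h := indep_biSup_compl (fun i => (hε.1 i).comap_le) hε.2.1.iIndep ({j}ᶜ : Set ℕ)
  rw [compl_compl] at h
  refine indep_of_indep_of_le_right (indep_of_indep_of_le_left h ?_)
    (le_biSup (fun i => MeasurableSpace.comap (ε i) inferInstance) (Set.mem_singleton j))
  rw [← measurable_iff_comap_le]
  refine @measurable_pi_lambda Ω ℕ (fun _ => ℝ)
    (⨆ i ∈ ({j}ᶜ : Set ℕ), MeasurableSpace.comap (ε i) inferInstance) _ _ fun i => ?_
  by_cases hij : i = j
  · subst hij
    simp [measurable_const]
  · simp only [Function.update_of_ne hij]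
    exact (comap_measurable (ε i)).mono
      (le_biSup (fun i => MeasurableSpace.comap (ε i) inferInstance) hij) le_rfl

lemma lintegral_comp_update_add (hε : IsStdGaussianNoise P ε) (j : ℕ) (a : ℝ)
    {F : (ℕ → ℝ) → ℝ≥0∞} (hF : Measurable F) :
    ∫⁻ ω, F (Function.update (ε · ω) j (ε j ω + a)) ∂P =
      ∫⁻ ω, F (ε · ω) * ENNReal.ofReal (exp (a * ε j ω - a ^ 2 / 2)) ∂P := by
  have := hε.2.1.isProbabilityMeasure
  have h := (hε.indepFun_update_zero j).lintegral_comp_add_gaussian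
    (measurable_update'.comp (hε.measurable_pi.prodMk measurable_const)) (hε.1 j) (hε.2.2 j) a
    (hF.comp measurable_update' : Measurable fun p : (ℕ → ℝ) × ℝ => F (Function.update p.1 j p.2))
  simpa only [Function.comp_apply, Function.update_idem, Function.update_eq_self] using h

lemma lintegral_comp_add (hε : IsStdGaussianNoise P ε) {S : Finset ℕ} {w : ℕ → ℝ}
    (hw : ∀ i ∉ S, w i = 0) {F : (ℕ → ℝ) → ℝ≥0∞} (hF : Measurable F) :
    ∫⁻ ω, F (fun i => ε i ω + w i) ∂P =
      ∫⁻ ω, F (ε · ω) * gaussianShiftDensity S w (ε · ω) ∂P := by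
  classical
  induction S using Finset.induction_on generalizing w F with
  | empty =>
    obtain rfl : w = 0 := funext fun i => hw i (notMem_empty i)
    simp [gaussianShiftDensity]
  | insert j S hj ih =>
    set w' := Function.update w j 0
    have hw' : ∀ i ∉ S, w' i = 0 := fun i hi => by
      by_cases hij : i = j
      · simp [w', hij]
      · simp [w', hij, hw i (by simp [hij, hi])]
    have hsplit : ∀ e : ℕ → ℝ,
        (fun i => e i + w i) = fun i => Function.update e j (e j + w j) i + w' i := by
      intro e; funext i
      by_cases hij : i = j
      · simp [w', hij]
      · simp [w', hij]
    calc ∫⁻ ω, F (fun i => ε i ω + w i) ∂P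
        = ∫⁻ ω, F (fun i => Function.update (ε · ω) j (ε j ω + w j) i + w' i) ∂P := by
          simp_rw [← hsplit]
      _ = ∫⁻ ω, F (fun i => ε i ω + w' i) * ENNReal.ofReal (exp (w j * ε j ω - w j ^ 2 / 2)) ∂P :=
          hε.lintegral_comp_update_add j (w j) (F := fun e => F (fun i => e i + w' i))
            (by fun_prop)
      _ = ∫⁻ ω, F (ε · ω) * ENNReal.ofReal (exp (w j * ε j ω - w j ^ 2 / 2)) *
            gaussianShiftDensity S w' (ε · ω) ∂P := by
          refine (lintegral_congr fun ω => ?_).trans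
            (ih hw' (F := fun e => F e * ENNReal.ofReal (exp (w j * e j - w j ^ 2 / 2)))
              (by fun_prop))
          simp [w']
      _ = ∫⁻ ω, F (ε · ω) * gaussianShiftDensity (insert j S) w (ε · ω) ∂P := by
          refine lintegral_congr fun ω => ?_
          have hS : ∑ i ∈ S, (w' i * ε i ω - w' i ^ 2 / 2) = ∑ i ∈ S, (w i * ε i ω - w i ^ 2 / 2) :=
            sum_congr rfl fun i hi => by simp [w', ne_of_mem_of_not_mem hi hj]
          rw [gaussianShiftDensity, gaussianShiftDensity, sum_insert hj, hS, exp_add,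
            ENNReal.ofReal_mul (exp_nonneg _), mul_assoc]

lemma lintegral_gaussianShiftDensity (hε : IsStdGaussianNoise P ε) {S : Finset ℕ} {w : ℕ → ℝ}
    (hw : ∀ i ∉ S, w i = 0) : ∫⁻ ω, gaussianShiftDensity S w (ε · ω) ∂P = 1 := by
  have := hε.2.1.isProbabilityMeasure
  simpa using (hε.lintegral_comp_add hw (F := fun _ => 1) measurable_const).symm

lemma lintegral_gaussianShiftDensity_sq (hε : IsStdGaussianNoise P ε) {S : Finset ℕ}
    {w : ℕ → ℝ} (hw : ∀ i ∉ S, w i = 0) :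
    ∫⁻ ω, gaussianShiftDensity S w (ε · ω) ^ 2 ∂P = ENNReal.ofReal (exp (∑ i ∈ S, w i ^ 2)) := by
  simp_rw [gaussianShiftDensity_sq]
  rw [lintegral_mul_const' _ _ ENNReal.ofReal_ne_top,
    hε.lintegral_gaussianShiftDensity (fun i hi => by simp [hw i hi]), one_mul]

lemma measure_oneCP_add_mem (hε : IsStdGaussianNoise P ε) {τ τ' : ℕ} (h : τ ≤ τ') (μ₁ μ₂ : ℝ)
    {A : Set (ℕ → ℝ)} (hA : MeasurableSet A) :
    P {ω | (fun i => oneCP τ' μ₁ μ₂ i + ε i ω) ∈ A} =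
      ∫⁻ ω in {ω | (fun i => oneCP τ μ₁ μ₂ i + ε i ω) ∈ A}, gaussianShiftDensity (Ico τ τ')
        (fun i => if i ∈ Ico τ τ' then μ₁ - μ₂ else 0) (ε · ω) ∂P := by
  have hD : ∀ τ, MeasurableSet {ω | (fun i => oneCP τ μ₁ μ₂ i + ε i ω) ∈ A} := fun τ =>
    measurable_pi_lambda _ (fun i => (hε.1 i).const_add _) hA
  have hF : Measurable fun e : ℕ → ℝ =>
      A.indicator (1 : (ℕ → ℝ) → ℝ≥0∞) (fun i => oneCP τ μ₁ μ₂ i + e i) :=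
    (measurable_one.indicator hA).comp (measurable_pi_lambda _ fun i => by fun_prop)
  rw [← lintegral_indicator_one (hD τ'), ← lintegral_indicator (hD τ)]
  refine (lintegral_congr fun ω => ?_).trans
    ((hε.lintegral_comp_add (S := Ico τ τ') (w := fun i => if i ∈ Ico τ τ' then μ₁ - μ₂ else 0)
      (fun i hi => if_neg hi) hF).trans (lintegral_congr fun ω => ?_))
  · have hshift : (fun i => oneCP τ μ₁ μ₂ i + (ε i ω + if i ∈ Ico τ τ' then μ₁ - μ₂ else 0)) =
        fun i => oneCP τ' μ₁ μ₂ i + ε i ω := by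
      funext i
      rw [oneCP_eq_add_ite h]
      ring
    simp only [hshift]
    by_cases hω : (fun i => oneCP τ' μ₁ μ₂ i + ε i ω) ∈ A <;> simp [hω]
  · by_cases hω : (fun i => oneCP τ μ₁ μ₂ i + ε i ω) ∈ A <;> simp [hω]

lemma two_point_lower_bound (hε : IsStdGaussianNoise P ε) (μ₁ μ₂ : ℝ) {τhat : (ℕ → ℝ) → ℕ}
    (hτhat : Measurable τhat) {τ τ' : ℕ} (h : τ ≤ τ') {r : ℝ} (hr : 2 * r ≤ (τ' : ℝ) - τ) :
    (4 * ENNReal.ofReal (exp (((τ' : ℝ) - τ) * (μ₂ - μ₁) ^ 2)))⁻¹ ⊓ 2⁻¹ ≤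
      P {ω | r ≤ |(τhat (fun i => oneCP τ μ₁ μ₂ i + ε i ω) : ℝ) - τ|} ⊔
        P {ω | r ≤ |(τhat (fun i => oneCP τ' μ₁ μ₂ i + ε i ω) : ℝ) - τ'|} := by
  set w : ℕ → ℝ := fun i => if i ∈ Ico τ τ' then μ₁ - μ₂ else 0
  have hw : ∀ i ∉ Ico τ τ', w i = 0 := fun i hi => if_neg hi
  set A := {y : ℕ → ℝ | r ≤ |(τhat y : ℝ) - τ'|}
  have hA : MeasurableSet A :=
    hτhat (MeasurableSet.of_discrete (s := {k : ℕ | r ≤ |(k : ℝ) - τ'|}))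
  set D := {ω | (fun i => oneCP τ μ₁ μ₂ i + ε i ω) ∈ A}
  have hD : MeasurableSet D := measurable_pi_lambda _ (fun i => (hε.1 i).const_add _) hA
  have hsum : ∑ i ∈ Ico τ τ', w i ^ 2 = ((τ' : ℝ) - τ) * (μ₂ - μ₁) ^ 2 := by
    rw [sum_congr rfl fun i hi => show w i ^ 2 = (μ₁ - μ₂) ^ 2 by simp only [w, if_pos hi],
      sum_const, Nat.card_Ico, nsmul_eq_mul, Nat.cast_sub h]
    ring
  have hDc : Dᶜ ⊆ {ω | r ≤ |(τhat (fun i => oneCP τ μ₁ μ₂ i + ε i ω) : ℝ) - τ|} := by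
    intro ω hω
    simp only [D, A, Set.mem_compl_iff, Set.mem_ofPred_eq, not_le] at hω ⊢
    set t : ℝ := (τhat (fun i => oneCP τ μ₁ μ₂ i + ε i ω) : ℝ)
    linarith [le_abs_self (t - τ), neg_abs_le (t - τ')]
  calc (4 * ENNReal.ofReal (exp (((τ' : ℝ) - τ) * (μ₂ - μ₁) ^ 2)))⁻¹ ⊓ 2⁻¹
      ≤ P Dᶜ ⊔ ∫⁻ ω in D, gaussianShiftDensity (Ico τ τ') w (ε · ω) ∂P :=
        inf_le_measure_compl_sup_setLIntegral
          (ρ := fun ω => gaussianShiftDensity (Ico τ τ') w (ε · ω))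
          ((measurable_gaussianShiftDensity _ _).comp hε.measurable_pi).aemeasurable
          (hε.lintegral_gaussianShiftDensity hw)
          ((hε.lintegral_gaussianShiftDensity_sq hw).trans (by rw [hsum])).le hD
    _ ≤ _ := sup_le_sup (measure_mono hDc) (hε.measure_oneCP_add_mem h μ₁ μ₂ hA).ge

end IsStdGaussianNoise

lemma ofReal_exp_le_inv_four_mul_ofReal_exp_inf {a b : ℝ} (ha : 0 ≤ a) (hb : b ≤ 4 + a) :
    ENNReal.ofReal (exp (-4) / 4 * exp (-a)) ≤ (4 * ENNReal.ofReal (exp b))⁻¹ ⊓ 2⁻¹ := by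
  have hexp : exp (-4) / 4 * exp (-a) ≤ exp (-b) / 4 := by
    rw [div_mul_eq_mul_div, ← exp_add]
    gcongr
    linarith
  refine le_inf ?_ ?_
  · rw [← ENNReal.ofReal_ofNat 4, ← ENNReal.ofReal_mul (by norm_num),
      ← ENNReal.ofReal_inv_of_pos (by positivity)]
    refine ENNReal.ofReal_le_ofReal (hexp.trans_eq ?_)
    rw [exp_neg]
    ring
  · rw [← ENNReal.ofReal_ofNat 2, ← ENNReal.ofReal_inv_of_pos (by norm_num)]
    refine ENNReal.ofReal_le_ofReal ?_
    have h4 : exp (-4) ≤ 1 := exp_le_one_iff.mpr (by norm_num)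
    have ha1 : exp (-a) ≤ 1 := exp_le_one_iff.mpr (by linarith)
    nlinarith [exp_pos (-4), exp_pos (-a)]

theorem single_change_point_localization_lower_bound (μ₁ μ₂ : ℝ) (hμ : μ₁ ≠ μ₂) :
    ∃ c > (0 : ℝ), ∃ c' > (0 : ℝ),
    ∀ n : ℕ, (4 : ℝ) / (μ₂ - μ₁) ^ 2 < n →
    ∀ x : ℝ, 1/2 ≤ x → x < (n : ℝ)/2 - 1 - 2 / (μ₂ - μ₁) ^ 2 →
    ∀ (Ω : Type) (_ : MeasurableSpace Ω) (P : Measure Ω), IsProbabilityMeasure P →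
    ∀ ε : ℕ → Ω → ℝ, IsStdGaussianNoise P ε →
    ∀ τhat : (ℕ → ℝ) → ℕ, Measurable τhat → (∀ y, τhat y ∈ Finset.Icc 2 n) →
      ENNReal.ofReal (c * Real.exp (-(c' * x * (μ₂ - μ₁) ^ 2))) ≤
        ⨆ τ ∈ Finset.Icc 2 n, P {ω |
          2 / (μ₂ - μ₁) ^ 2 + x ≤ |((τhat (fun i => oneCP τ μ₁ μ₂ i + ε i ω) : ℝ)) - (τ : ℝ)|} := by
  refine ⟨exp (-4) / 4, by positivity, 4, by norm_num, ?_⟩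
  intro n _ x hx hxn Ω _ P _ ε hε τhat hτhat _
  have hd : 0 < (μ₂ - μ₁) ^ 2 := by have := sub_ne_zero.2 hμ.symm; positivity
  set r := 2 / (μ₂ - μ₁) ^ 2 + x
  set m := ⌈2 * r⌉₊
  have hm : 2 * r ≤ m := Nat.le_ceil _
  have hm' : (m : ℝ) < 2 * r + 1 := Nat.ceil_lt_add_one (by positivity)
  have hmn : 2 + m ≤ n := by
    have : m + 1 < n := by exact_mod_cast (by linarith : (m : ℝ) + 1 < n)
    omega
  have hmd : (m : ℝ) * (μ₂ - μ₁) ^ 2 ≤ 4 + 4 * x * (μ₂ - μ₁) ^ 2 := by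
    have h2r : 2 * r * (μ₂ - μ₁) ^ 2 = 4 + 2 * x * (μ₂ - μ₁) ^ 2 := by
      simp only [r]; field_simp; ring
    nlinarith
  calc ENNReal.ofReal (exp (-4) / 4 * exp (-(4 * x * (μ₂ - μ₁) ^ 2)))
      ≤ (4 * ENNReal.ofReal (exp ((((2 + m : ℕ) : ℝ) - (2 : ℕ)) * (μ₂ - μ₁) ^ 2)))⁻¹ ⊓ 2⁻¹ :=
        ofReal_exp_le_inv_four_mul_ofReal_exp_inf (by positivity) (by push_cast; linarith)
    _ ≤ _ := hε.two_point_lower_bound μ₁ μ₂ hτhat (r := r) (by omega) (by push_cast; linarith)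
    _ ≤ ⨆ τ ∈ Finset.Icc 2 n, P {ω | r ≤ |(τhat (fun i => oneCP τ μ₁ μ₂ i + ε i ω) : ℝ) - τ|} :=
        sup_le (le_iSup₂_of_le 2 (Finset.mem_Icc.2 ⟨le_rfl, by omega⟩) le_rfl)
          (le_iSup₂_of_le (2 + m) (Finset.mem_Icc.2 ⟨by omega, hmn⟩) le_rfl)
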